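/- Let n, b, d be positive integers with b ≤ n/2, and let p : ℝ^d → (0,∞) be an L-log-Lipschitz probability density, i.e., p is differentiable with ‖∇ log p(w)‖ ≤ L for all w ∈ ℝ^d. Let β ∈ [0, 1/L]. Let G be the collection of all subsets of {1,…,n} of size b, G_n = {B ∈ G : n ∈ B}, and let {μ_B : B ∈ G} and {μ'_B : B ∈ G} be points of ℝ^d such that (i) ‖μ_B − μ'_B‖ ≤ β for all B ∈ G_n and μ_B = μ'_B for all B ∈ G \ G_n, and (ii) the diameter of {μ_B : B ∈ G} ∪ {μ'_B : B ∈ G} is at most 1. For μ ∈ ℝ^d let p_μ denote the probability measure on ℝ^d with density w ↦ p(w − μ), and let P = (1/|G|)Σ_{B∈G} p_{μ_B} and P' = (1/|G|)Σ_{B∈G} p_{μ'_B}. Then D_KL(P, P') ≤ 2·(ln 2)·L²·e^L · b²β²/n². -/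

import Mathlib

open MeasureTheory ProbabilityTheory Real
open scoped ENNReal

/-- Kullback–Leibler divergence `D_KL(P,Q) = ∫ log(dP/dQ) dP`, set to `+∞` when
`P` is not absolutely continuous with respect to `Q`. -/
noncomputable def klDiv {α : Type*} [MeasurableSpace α] (P Q : Measure α) : ℝ≥0∞ :=
  @ite _ (P ≪ Q) (Classical.dec _) (ENNReal.ofReal (∫ x, llr P Q x ∂P)) ⊤

/-- The collection `G` of all mini-batches: subsets of `{1,…,n}` of size `b`. -/
def batches (n b : ℕ) : Finset (Finset (Fin n)) :=
  Finset.powersetCard b (Finset.univ : Finset (Fin n))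

/-- The shift of the probability measure with density `p` by the vector `μ`:
the measure on `ℝ^d` with density `w ↦ p(w − μ)`. -/
noncomputable def shiftedNoise {d : ℕ} (p : EuclideanSpace ℝ (Fin d) → ℝ)
    (μ : EuclideanSpace ℝ (Fin d)) : Measure (EuclideanSpace ℝ (Fin d)) :=
  MeasureTheory.volume.withDensity fun w => ENNReal.ofReal (p (w - μ))

/-! Write the two mixture densities (times `|G|`) as `f = a + u` and `g = a + v`, where `a` sums
the noise over the batches without the last point, on which the two mixtures agree. Pointwise,
`f log (f/g) + g - f ≤ (u - v)² / g`. Log-Lipschitzness gives `e^{-Lβ} ≤ u/v ≤ e^{Lβ}`, hence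
`(u - v)² ≤ 2 (cosh (Lβ) - 1) u v`, and, through the diameter bound, averaging gives
`v / g ≤ e^L |G_n| / |G|`. Integrating, with `∫ u = |G_n|` and `|G_n| / |G| = b / n`, and using
`cosh x - 1 ≤ (ln 2) x²` for `|x| ≤ 1`, yields the bound. -/

open Finset

lemma mul_log_div_add_sub_le_sq_div {f g : ℝ} (hf : 0 ≤ f) (hg : 0 < g) :
    f * log (f / g) + (g - f) ≤ (f - g) ^ 2 / g := by
  have hlog : f * log (f / g) ≤ f * (f / g - 1) := by
    rcases hf.eq_or_lt with rfl | hf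
    · simp
    exact mul_le_mul_of_nonneg_left (log_le_sub_one_of_pos (by positivity)) hf.le
  have hsq : f * (f / g - 1) + (g - f) = (f - g) ^ 2 / g := by
    field_simp
    ring
  linarith

lemma sq_sub_le_two_mul_cosh_sub_one_mul {u v t : ℝ} (huv : u ≤ exp t * v)
    (hvu : v ≤ exp t * u) : (u - v) ^ 2 ≤ 2 * (cosh t - 1) * (u * v) := by
  have hprod : 0 ≤ exp (-t) * ((exp t * v - u) * (exp t * u - v)) :=
    mul_nonneg (exp_pos _).le (mul_nonneg (by linarith) (by linarith))
  have hinv : exp (-t) * exp t = 1 := by rw [← exp_add, neg_add_cancel, exp_zero]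
  -- `2 (cosh t - 1) u v - (u - v)² = e^{-t} (e^t v - u) (e^t u - v)`
  rw [cosh_eq]
  linear_combination hprod + (exp t * u * v - u ^ 2 - v ^ 2) * hinv

lemma cosh_sub_one_le_log_two_mul_sq {x : ℝ} (hx : |x| ≤ 1) :
    cosh x - 1 ≤ log 2 * x ^ 2 := by
  -- order-4 Taylor: `cosh x - 1 ≤ x² / 2 + (5 / 96) x⁴ ≤ 0.56 x²`
  have hpos := Real.exp_bound hx (n := 4) (by norm_num)
  have hneg := Real.exp_bound (x := -x) (by rwa [abs_neg]) (n := 4) (by norm_num)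
  simp only [sum_range_succ, sum_range_zero, abs_neg] at hpos hneg
  norm_num [Nat.factorial] at hpos hneg
  have hx4 : |x| ^ 4 ≤ x ^ 2 := by
    rw [show |x| ^ 4 = x ^ 2 * |x| ^ 2 by rw [← sq_abs x]; ring]
    exact mul_le_of_le_one_right (sq_nonneg x) (pow_le_one₀ (abs_nonneg x) hx)
  rw [cosh_eq]
  nlinarith [(abs_le.1 hpos).2, (abs_le.1 hneg).2, Real.log_two_gt_d9, sq_nonneg x]

lemma le_exp_mul_norm_sub_mul_of_norm_gradient_log_le {F : Type*} [NormedAddCommGroup F]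
    [InnerProductSpace ℝ F] [CompleteSpace F] {p : F → ℝ} {L : ℝ} (hp_pos : ∀ w, 0 < p w)
    (hp_diff : Differentiable ℝ p) (hp_lip : ∀ w, ‖gradient (fun v => log (p v)) w‖ ≤ L)
    (z z' : F) : p z ≤ exp (L * ‖z - z'‖) * p z' := by
  have hlog : log (p z) - log (p z') ≤ L * ‖z - z'‖ := by
    refine (le_abs_self _).trans ?_
    refine Convex.norm_image_sub_le_of_norm_fderiv_le (𝕜 := ℝ) (s := Set.univ)
      (fun w _ => (hp_diff w).log (hp_pos w).ne') (fun w _ => ?_) convex_univ trivial trivial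
    simpa [gradient] using hp_lip w
  calc p z = exp (log (p z) - log (p z')) * p z' := by
        rw [exp_sub, exp_log (hp_pos z), exp_log (hp_pos z'),
          div_mul_cancel₀ _ (hp_pos z').ne']
    _ ≤ exp (L * ‖z - z'‖) * p z' := by gcongr; exact (hp_pos z').le

lemma comp_sub_le_exp_mul_comp_sub_of_norm_gradient_log_le {F : Type*} [NormedAddCommGroup F]
    [InnerProductSpace ℝ F] [CompleteSpace F] {p : F → ℝ} {L : ℝ} (hp_pos : ∀ w, 0 < p w)
    (hp_diff : Differentiable ℝ p) (hp_lip : ∀ w, ‖gradient (fun v => log (p v)) w‖ ≤ L)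
    (hL : 0 ≤ L) {a a' : F} {r : ℝ} (har : ‖a - a'‖ ≤ r) (w : F) :
    p (w - a) ≤ exp (L * r) * p (w - a') := by
  refine (le_exp_mul_norm_sub_mul_of_norm_gradient_log_le hp_pos hp_diff hp_lip
    (w - a) (w - a')).trans ?_
  rw [sub_sub_sub_cancel_left, norm_sub_rev]
  gcongr
  exact (hp_pos _).le

lemma Finset.sum_mul_card_le_of_forall_le {ι R : Type*} [CommSemiring R] [PartialOrder R]
    [IsOrderedRing R] {s t : Finset ι} {y : ι → R} {K : R}
    (h : ∀ i ∈ t, ∀ j ∈ s, y i ≤ K * y j) :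
    (∑ i ∈ t, y i) * #s ≤ K * #t * ∑ j ∈ s, y j := by
  calc (∑ i ∈ t, y i) * #s = ∑ i ∈ t, ∑ _j ∈ s, y i := by
        simp [sum_const, Finset.sum_mul, mul_comm]
    _ ≤ ∑ _i ∈ t, ∑ j ∈ s, K * y j :=
        sum_le_sum fun i hi => sum_le_sum fun j hj => h i hi j hj
    _ = K * #t * ∑ j ∈ s, y j := by
        rw [← Finset.mul_sum, sum_const, nsmul_eq_mul]; ring

lemma sum_mul_log_div_sum_add_sub_le {ι : Type*} {s t : Finset ι} (hts : t ⊆ s)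
    {x y : ι → ℝ} (hx : ∀ i ∈ s, 0 ≤ x i) (hy : 0 < ∑ i ∈ s, y i)
    (hxy_eq : ∀ i ∈ s, i ∉ t → x i = y i) {r K : ℝ}
    (hxy : ∀ i ∈ t, x i ≤ exp r * y i) (hyx : ∀ i ∈ t, y i ≤ exp r * x i)
    (hyy : ∀ i ∈ t, ∀ j ∈ s, y i ≤ K * y j) :
    (∑ i ∈ s, x i) * log ((∑ i ∈ s, x i) / ∑ i ∈ s, y i) +
        (∑ i ∈ s, y i - ∑ i ∈ s, x i) ≤
      2 * (cosh r - 1) * K * (#t / #s) * ∑ i ∈ t, x i := by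
  classical
  set u := ∑ i ∈ t, x i
  set v := ∑ i ∈ t, y i
  have hdiff : ∑ i ∈ s, x i - ∑ i ∈ s, y i = u - v := by
    rw [← sum_sdiff hts, ← sum_sdiff hts (f := y),
      sum_congr rfl fun i hi => hxy_eq i (mem_sdiff.1 hi).1 (mem_sdiff.1 hi).2]
    ring
  have hu : 0 ≤ u := sum_nonneg fun i hi => hx i (hts hi)
  have hs : (0 : ℝ) < #s := by
    rw [Nat.cast_pos, card_pos]
    exact nonempty_of_sum_ne_zero hy.ne'
  have hquad : (u - v) ^ 2 ≤ 2 * (cosh r - 1) * (u * v) :=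
    sq_sub_le_two_mul_cosh_sub_one_mul (by rw [mul_sum]; exact sum_le_sum hxy)
      (by rw [mul_sum]; exact sum_le_sum hyx)
  have hv : v / ∑ i ∈ s, y i ≤ K * (#t / #s) := by
    rw [div_le_iff₀ hy, mul_div_assoc', div_mul_eq_mul_div, le_div_iff₀ hs]
    exact sum_mul_card_le_of_forall_le hyy
  have hcosh : 0 ≤ 2 * (cosh r - 1) * u := by nlinarith [one_le_cosh r]
  calc _ ≤ (∑ i ∈ s, x i - ∑ i ∈ s, y i) ^ 2 / ∑ i ∈ s, y i :=
        mul_log_div_add_sub_le_sq_div (sum_nonneg hx) hy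
    _ ≤ 2 * (cosh r - 1) * u * (v / ∑ i ∈ s, y i) := by
        rw [hdiff, mul_div_assoc', div_le_div_iff_of_pos_right hy, mul_assoc]
        exact hquad
    _ ≤ 2 * (cosh r - 1) * u * (K * (#t / #s)) := mul_le_mul_of_nonneg_left hv hcosh
    _ = 2 * (cosh r - 1) * K * (#t / #s) * u := by ring

lemma card_filter_mem_powersetCard_mul_card {α : Type*} [Fintype α] [DecidableEq α] (a : α)
    (k : ℕ) :
    #{B ∈ powersetCard k (univ : Finset α) | a ∈ B} * Fintype.card α =
      k * #(powersetCard k (univ : Finset α)) := by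
  cases k with
  | zero => simp
  | succ k =>
    obtain ⟨m, hm⟩ := Nat.exists_eq_add_one.2 (Fintype.card_pos_iff.2 ⟨a⟩)
    simp only [← singleton_subset_iff]
    rw [card_filter_powersetCard_subset _ _ _ (subset_univ _) (by simp), card_powersetCard,
      card_univ, card_singleton, hm, Nat.add_sub_cancel, Nat.add_sub_cancel, mul_comm,
      Nat.add_one_mul_choose_eq, mul_comm]

lemma klDiv_withDensity_ofReal_le {α : Type*} [MeasurableSpace α] {μ : Measure α}
    {f g h : α → ℝ} (hfm : Measurable f) (hgm : Measurable g) (hf : ∀ x, 0 ≤ f x)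
    (hg : ∀ x, 0 < g x) (hfi : Integrable f μ) (hgi : Integrable g μ)
    (hfg : ∫ x, f x ∂μ = ∫ x, g x ∂μ) (hhi : Integrable h μ)
    (hfgh : ∀ x, f x * log (f x / g x) + (g x - f x) ≤ h x) :
    klDiv (μ.withDensity fun x => ENNReal.ofReal (f x))
      (μ.withDensity fun x => ENNReal.ofReal (g x)) ≤ ENNReal.ofReal (∫ x, h x ∂μ) := by
  set P := μ.withDensity fun x => ENNReal.ofReal (f x) with hP
  set Q := μ.withDensity fun x => ENNReal.ofReal (g x)
  have : IsFiniteMeasure Q := isFiniteMeasure_withDensity_ofReal hgi.2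
  have hratio : Measurable fun x => ENNReal.ofReal (f x / g x) := (hfm.div hgm).ennreal_ofReal
  have hPQ : P = Q.withDensity fun x => ENNReal.ofReal (f x / g x) := by
    rw [hP, ← withDensity_mul _ hgm.ennreal_ofReal hratio]
    congr 1
    funext x
    rw [Pi.mul_apply, ← ENNReal.ofReal_mul (hg x).le, mul_div_cancel₀ _ (hg x).ne']
  have hac : P ≪ Q := hPQ ▸ withDensity_absolutelyContinuous _ _
  have hllr : llr P Q =ᵐ[P] fun x => log (f x / g x) := hac.ae_eq <| by
    filter_upwards [hPQ ▸ Measure.rnDeriv_withDensity Q hratio] with x hx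
    simp only [llr_def, hx, ENNReal.toReal_ofReal (div_nonneg (hf x) (hg x).le)]
  have hP_integral : ∫ x, llr P Q x ∂P = ∫ x, f x * log (f x / g x) ∂μ := by
    rw [integral_congr_ae hllr, hP, integral_withDensity_eq_integral_toReal_smul
      hfm.ennreal_ofReal (ae_of_all _ fun _ => ENNReal.ofReal_lt_top)]
    simp only [ENNReal.toReal_ofReal (hf _), smul_eq_mul]
  rw [klDiv, if_pos hac, hP_integral]
  refine ENNReal.ofReal_le_ofReal ?_
  have hgf : Integrable (fun x => g x - f x) μ := hgi.sub hfi
  by_cases hint : Integrable (fun x => f x * log (f x / g x)) μ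
  · calc ∫ x, f x * log (f x / g x) ∂μ
        = ∫ x, (f x * log (f x / g x) + (g x - f x)) ∂μ := by
          rw [integral_add hint hgf, integral_sub hgi hfi, hfg, sub_self, add_zero]
      _ ≤ ∫ x, h x ∂μ := integral_mono (hint.add hgf) hhi hfgh
  · -- the Bochner integral is then `0`, while `h ≥ g * klFun (f / g) ≥ 0`
    rw [integral_undef hint]
    refine integral_nonneg fun x => ?_
    have hkl := mul_nonneg (hg x).le (InformationTheory.klFun_nonneg (div_nonneg (hf x) (hg x).le))
    rw [InformationTheory.klFun, mul_sub, mul_add, ← mul_assoc, mul_div_cancel₀ _ (hg x).ne']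
      at hkl
    show 0 ≤ h x
    linarith [hfgh x]

lemma withDensity_finsetSum {α ι : Type*} [MeasurableSpace α] (μ : Measure α) (s : Finset ι)
    {f : ι → α → ℝ≥0∞} (hf : ∀ i ∈ s, Measurable (f i)) :
    μ.withDensity (∑ i ∈ s, f i) = ∑ i ∈ s, μ.withDensity (f i) := by
  classical
  induction s using Finset.induction_on with
  | empty => simp
  | insert j s hj ih =>
    rw [sum_insert hj, sum_insert hj, withDensity_add_left (hf j (mem_insert_self j s)),
      ih fun i hi => hf i (mem_insert_of_mem hi)]

lemma integrable_and_integral_eq_one_of_isProbabilityMeasure_withDensity {α : Type*}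
    [MeasurableSpace α] {μ : Measure α} {p : α → ℝ} (hp0 : ∀ x, 0 ≤ p x)
    (hpm : AEStronglyMeasurable p μ)
    (hp : IsProbabilityMeasure (μ.withDensity fun x => ENNReal.ofReal (p x))) :
    Integrable p μ ∧ ∫ x, p x ∂μ = 1 := by
  have hmass : ∫⁻ x, ENNReal.ofReal (p x) ∂μ = 1 := by
    have := hp.measure_univ
    rwa [withDensity_apply _ MeasurableSet.univ, Measure.restrict_univ] at this
  refine ⟨⟨hpm, (hasFiniteIntegral_iff_ofReal (ae_of_all _ hp0)).2
    (hmass ▸ ENNReal.one_lt_top)⟩, ?_⟩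
  rw [integral_eq_lintegral_of_nonneg_ae (ae_of_all _ hp0) hpm, hmass, ENNReal.toReal_one]

lemma integral_finsetSum_comp_sub_eq_card {G ι : Type*} [MeasurableSpace G] [AddGroup G]
    [MeasurableAdd G] {μ : Measure G} [μ.IsAddRightInvariant] {p : G → ℝ}
    (hp : Integrable p μ) (hp_one : ∫ x, p x ∂μ = 1) (s : Finset ι) (ν : ι → G) :
    ∫ x, ∑ i ∈ s, p (x - ν i) ∂μ = #s := by
  simp [integral_finsetSum _ fun i _ => hp.comp_sub_right _, integral_sub_right_eq_self,
    hp_one]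

noncomputable def noiseMixture {d : ℕ} {ι : Type*} (p : EuclideanSpace ℝ (Fin d) → ℝ)
    (s : Finset ι) (ν : ι → EuclideanSpace ℝ (Fin d)) : Measure (EuclideanSpace ℝ (Fin d)) :=
  (#s : ℝ≥0∞)⁻¹ • ∑ i ∈ s, shiftedNoise p (ν i)

lemma noiseMixture_eq_withDensity {d : ℕ} {ι : Type*} {p : EuclideanSpace ℝ (Fin d) → ℝ}
    (hpm : Measurable p) (hp0 : ∀ w, 0 ≤ p w) {s : Finset ι} (hs : s.Nonempty)
    (ν : ι → EuclideanSpace ℝ (Fin d)) :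
    noiseMixture p s ν =
      volume.withDensity fun w => ENNReal.ofReal ((#s : ℝ)⁻¹ * ∑ i ∈ s, p (w - ν i)) := by
  have hdensity : (fun w => ENNReal.ofReal ((#s : ℝ)⁻¹ * ∑ i ∈ s, p (w - ν i))) =
      (#s : ℝ≥0∞)⁻¹ • ∑ i ∈ s, fun w => ENNReal.ofReal (p (w - ν i)) := by
    funext w
    rw [ENNReal.ofReal_mul (by positivity),
      ENNReal.ofReal_inv_of_pos (by simpa using hs.card_pos),
      ENNReal.ofReal_sum_of_nonneg fun i _ => hp0 _]
    simp
  rw [hdensity, withDensity_smul' _ _ (ENNReal.inv_ne_top.2 (by simpa using hs.ne_empty)),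
    withDensity_finsetSum (f := fun i w => ENNReal.ofReal (p (w - ν i))) _ _
      fun i _ => (hpm.comp (measurable_sub_const _)).ennreal_ofReal]
  rfl

theorem klDiv_noiseMixture_le {d : ℕ} {ι : Type*} {p : EuclideanSpace ℝ (Fin d) → ℝ}
    {L β D : ℝ} (hL : 0 ≤ L) (hp_pos : ∀ w, 0 < p w) (hp_diff : Differentiable ℝ p)
    (hp_prob : IsProbabilityMeasure (volume.withDensity fun w => ENNReal.ofReal (p w)))
    (hp_lip : ∀ w, ‖gradient (fun v => log (p v)) w‖ ≤ L)
    {s t : Finset ι} (hs : s.Nonempty) (hts : t ⊆ s) {ν ν' : ι → EuclideanSpace ℝ (Fin d)}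
    (hclose : ∀ i ∈ t, ‖ν i - ν' i‖ ≤ β) (heq : ∀ i ∈ s, i ∉ t → ν i = ν' i)
    (hdiam : ∀ i ∈ t, ∀ j ∈ s, ‖ν' i - ν' j‖ ≤ D) :
    klDiv (noiseMixture p s ν) (noiseMixture p s ν') ≤
      ENNReal.ofReal (2 * (cosh (L * β) - 1) * exp (L * D) * (#t / #s) ^ 2) := by
  have hp_cont := hp_diff.continuous
  obtain ⟨hp_int, hp_one⟩ := integrable_and_integral_eq_one_of_isProbabilityMeasure_withDensity
    (fun w => (hp_pos w).le) hp_cont.aestronglyMeasurable hp_prob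
  have hshift {a a' : EuclideanSpace ℝ (Fin d)} {r : ℝ} (har : ‖a - a'‖ ≤ r) (w) :=
    comp_sub_le_exp_mul_comp_sub_of_norm_gradient_log_le hp_pos hp_diff hp_lip hL har w
  have hint : ∀ (u : Finset ι) (ν : ι → EuclideanSpace ℝ (Fin d)),
      Integrable (fun w => ∑ i ∈ u, p (w - ν i)) :=
    fun u ν => integrable_finsetSum _ fun i _ => hp_int.comp_sub_right _
  have hmass := integral_finsetSum_comp_sub_eq_card (ι := ι) hp_int hp_one
  have hmeas : ∀ (ν : ι → EuclideanSpace ℝ (Fin d)) (c : ℝ),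
      Measurable fun w => c * ∑ i ∈ s, p (w - ν i) := fun ν c =>
    (continuous_const.mul (continuous_finsetSum _ fun i _ =>
      hp_cont.comp (continuous_sub_right _))).measurable
  have hc : (0 : ℝ) < #s := by simpa using hs.card_pos
  rw [noiseMixture_eq_withDensity hp_cont.measurable (fun w => (hp_pos w).le) hs,
    noiseMixture_eq_withDensity hp_cont.measurable (fun w => (hp_pos w).le) hs]
  refine (klDiv_withDensity_ofReal_le (hmeas ν _) (hmeas ν' _)
    (fun w => mul_nonneg (inv_nonneg.2 hc.le) (sum_nonneg fun i _ => (hp_pos _).le))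
    (fun w => mul_pos (inv_pos.2 hc) (sum_pos (fun i _ => hp_pos _) hs))
    ((hint s ν).const_mul _) ((hint s ν').const_mul _)
    (by rw [integral_const_mul, integral_const_mul, hmass, hmass])
    (h := fun w => (#s : ℝ)⁻¹ *
      (2 * (cosh (L * β) - 1) * exp (L * D) * (#t / #s) * ∑ i ∈ t, p (w - ν i)))
    (((hint t ν).const_mul _).const_mul _) fun w => ?_).trans_eq ?_
  · have hpt := sum_mul_log_div_sum_add_sub_le hts (fun i _ => (hp_pos (w - ν i)).le)
      (sum_pos (fun i _ => hp_pos (w - ν' i)) hs) (fun i hi hit => by rw [heq i hi hit])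
      (fun i hi => hshift (hclose i hi) w)
      (fun i hi => hshift (norm_sub_rev (ν i) (ν' i) ▸ hclose i hi) w)
      (fun i hi j hj => hshift (hdiam i hi j hj) w)
    rw [mul_div_mul_left _ _ (inv_ne_zero hc.ne'), ← mul_sub, mul_assoc, ← mul_add]
    gcongr
  · rw [integral_const_mul, integral_const_mul, hmass]
    field_simp

theorem klDiv_logLipschitz_minibatch_mixtures_general
    (n b d : ℕ) (hn : 0 < n) (hbn : (b : ℝ) ≤ n / 2)
    (L : ℝ) (hL : 0 < L)
    (p : EuclideanSpace ℝ (Fin d) → ℝ)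
    (hp_pos : ∀ w, 0 < p w)
    (hp_diff : Differentiable ℝ p)
    (hp_prob : IsProbabilityMeasure
      (MeasureTheory.volume.withDensity fun w => ENNReal.ofReal (p w)))
    (hp_lip : ∀ w, ‖gradient (fun v => Real.log (p v)) w‖ ≤ L)
    (β : ℝ) (hβ0 : 0 ≤ β) (hβL : β ≤ 1 / L)
    (μ μ' : Finset (Fin n) → EuclideanSpace ℝ (Fin d))
    (hclose : ∀ B ∈ batches n b, (⟨n - 1, Nat.sub_lt hn one_pos⟩ : Fin n) ∈ B →
      ‖μ B - μ' B‖ ≤ β)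
    (heq : ∀ B ∈ batches n b, (⟨n - 1, Nat.sub_lt hn one_pos⟩ : Fin n) ∉ B →
      μ B = μ' B)
    (hdiam : ∀ B ∈ batches n b, ∀ B' ∈ batches n b,
      ‖μ B - μ B'‖ ≤ 1 ∧ ‖μ B - μ' B'‖ ≤ 1 ∧ ‖μ' B - μ' B'‖ ≤ 1) :
    klDiv
      (((batches n b).card : ℝ≥0∞)⁻¹ • ∑ B ∈ batches n b, shiftedNoise p (μ B))
      (((batches n b).card : ℝ≥0∞)⁻¹ • ∑ B ∈ batches n b, shiftedNoise p (μ' B)) ≤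
      ENNReal.ofReal (2 * Real.log 2 * L ^ 2 * Real.exp L * b ^ 2 * β ^ 2 / n ^ 2) := by
  set e : Fin n := ⟨n - 1, Nat.sub_lt hn one_pos⟩
  have hG : (batches n b).Nonempty := by
    refine powersetCard_nonempty.2 ?_
    rw [card_univ, Fintype.card_fin]
    exact_mod_cast (by linarith : (b : ℝ) ≤ n)
  have hratio : (#{B ∈ batches n b | e ∈ B} : ℝ) / #(batches n b) = b / n := by
    rw [div_eq_div_iff (by simpa using hG.card_pos.ne') (by positivity)]
    exact_mod_cast (by simpa [batches] using card_filter_mem_powersetCard_mul_card e b)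
  have hLβ : |L * β| ≤ 1 := by
    rw [abs_of_nonneg (by positivity)]
    calc L * β ≤ L * (1 / L) := by gcongr
      _ = 1 := by field_simp
  refine (klDiv_noiseMixture_le (D := 1) hL.le hp_pos hp_diff hp_prob hp_lip hG
    (filter_subset _ _) (fun B hB => hclose B (mem_filter.1 hB).1 (mem_filter.1 hB).2)
    (fun B hB heB => heq B hB fun he => heB (mem_filter.2 ⟨hB, he⟩))
    (fun B hB B' hB' => (hdiam B (mem_filter.1 hB).1 B' hB').2.2)).trans
    (ENNReal.ofReal_le_ofReal ?_)
  rw [hratio, mul_one]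
  calc 2 * (cosh (L * β) - 1) * exp L * (b / n) ^ 2
      ≤ 2 * (log 2 * (L * β) ^ 2) * exp L * (b / n) ^ 2 := by
        gcongr
        exact cosh_sub_one_le_log_two_mul_sq hLβ
    _ = 2 * log 2 * L ^ 2 * exp L * b ^ 2 * β ^ 2 / n ^ 2 := by ring

/-- KL divergence bound between two uniform mixtures of shifted `L`-log-Lipschitz
noise distributions indexed by mini-batches, which differ only on the batches
containing the last data point, by at most `β ≤ 1/L`, with mean diameter at most `1`:
`D_KL(P, P') ≤ 2 (ln 2) L² e^L b²β²/n²`. -/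
theorem klDiv_logLipschitz_minibatch_mixtures
    (n b d : ℕ) (hn : 0 < n) (hd : 0 < d) (hb : 0 < b) (hbn : (b : ℝ) ≤ n / 2)
    (L : ℝ) (hL : 0 < L)
    (p : EuclideanSpace ℝ (Fin d) → ℝ)
    (hp_pos : ∀ w, 0 < p w)
    (hp_diff : Differentiable ℝ p)
    (hp_prob : IsProbabilityMeasure
      (MeasureTheory.volume.withDensity fun w => ENNReal.ofReal (p w)))
    (hp_lip : ∀ w, ‖gradient (fun v => Real.log (p v)) w‖ ≤ L)
    (β : ℝ) (hβ0 : 0 ≤ β) (hβL : β ≤ 1 / L)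
    (μ μ' : Finset (Fin n) → EuclideanSpace ℝ (Fin d))
    (hclose : ∀ B ∈ batches n b, (⟨n - 1, Nat.sub_lt hn one_pos⟩ : Fin n) ∈ B →
      ‖μ B - μ' B‖ ≤ β)
    (heq : ∀ B ∈ batches n b, (⟨n - 1, Nat.sub_lt hn one_pos⟩ : Fin n) ∉ B →
      μ B = μ' B)
    (hdiam : ∀ B ∈ batches n b, ∀ B' ∈ batches n b,
      ‖μ B - μ B'‖ ≤ 1 ∧ ‖μ B - μ' B'‖ ≤ 1 ∧ ‖μ' B - μ' B'‖ ≤ 1) :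
    klDiv
      (((batches n b).card : ℝ≥0∞)⁻¹ • ∑ B ∈ batches n b, shiftedNoise p (μ B))
      (((batches n b).card : ℝ≥0∞)⁻¹ • ∑ B ∈ batches n b, shiftedNoise p (μ' B)) ≤
      ENNReal.ofReal (2 * Real.log 2 * L ^ 2 * Real.exp L * b ^ 2 * β ^ 2 / n ^ 2) :=
  klDiv_logLipschitz_minibatch_mixtures_general n b d hn hbn L hL p hp_pos hp_diff hp_prob hp_lip β
    hβ0 hβL μ μ' hclose heq hdiam
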